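/- In the symmetric quadratic-equation setup, the matrix H = V_⊥V_⊥ᵀEV satisfies ‖H‖_max ≤ (1 + rμ)·κ/√d. -/

import Mathlib

open Matrix BigOperators

/-- Entrywise max norm: largest absolute value of an entry. -/
noncomputable def matMaxNorm {m n : Type*} [Fintype m] [Fintype n] (M : Matrix m n ℝ) : ℝ :=
  ⨆ i, ⨆ j, |M i j|

/-- Matrix ∞-norm: maximum absolute row sum. -/
noncomputable def matInfNorm {m n : Type*} [Fintype m] [Fintype n] (M : Matrix m n ℝ) : ℝ :=
  ⨆ i, ∑ j, |M i j|

/-- Matrix 1-norm: maximum absolute column sum. -/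
noncomputable def matOneNorm {m n : Type*} [Fintype m] [Fintype n] (M : Matrix m n ℝ) : ℝ :=
  ⨆ j, ∑ i, |M i j|

/-- Euclidean norm of a vector. -/
noncomputable def vec2Norm {n : Type*} [Fintype n] (x : n → ℝ) : ℝ :=
  Real.sqrt (∑ i, (x i) ^ 2)

/-- ℓ∞ norm of a vector. -/
noncomputable def vecSupNorm {n : Type*} [Fintype n] (x : n → ℝ) : ℝ :=
  ⨆ i, |x i|

/-- Spectral norm (operator 2-norm) of a matrix. -/
noncomputable def matSpecNorm {m n : Type*} [Fintype m] [Fintype n] (M : Matrix m n ℝ) : ℝ :=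
  sSup {c : ℝ | ∃ x : n → ℝ, vec2Norm x ≤ 1 ∧ c = vec2Norm (M.mulVec x)}

/-- Coherence of a d × r matrix with orthonormal columns. -/
noncomputable def matCoherence {d r : ℕ} (V : Matrix (Fin d) (Fin r) ℝ) : ℝ :=
  ((d : ℝ) / (r : ℝ)) * ⨆ i, ∑ j, (V i j) ^ 2

/-- The positive semidefinite square root of a matrix (the former `Matrix.PosSemidef.sqrt`). -/
noncomputable def posSemidefSqrt {n : Type*} [Fintype n] [DecidableEq n] {S : Matrix n n ℝ}
    (h : S.PosSemidef) : Matrix n n ℝ :=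
  h.1.eigenvectorUnitary.1 * diagonal ((↑) ∘ Real.sqrt ∘ h.1.eigenvalues) *
    (star h.1.eigenvectorUnitary : Matrix n n ℝ)

/-- Inverse of the positive semidefinite square root of a matrix (junk value otherwise). -/
noncomputable def matInvSqrt {n : Type*} [Fintype n] [DecidableEq n] (S : Matrix n n ℝ) :
    Matrix n n ℝ :=
  letI := Classical.propDecidable
  if h : S.PosSemidef then (posSemidefSqrt h)⁻¹ else 0

/-- Weighted max-norm for matrices with d₁ + d₂ rows. -/
noncomputable def wMaxNorm {d₁ d₂ : ℕ} {n : Type*} [Fintype n]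
    (M : Matrix (Fin d₁ ⊕ Fin d₂) n ℝ) : ℝ :=
  matMaxNorm (Matrix.of fun i j =>
    (Sum.elim (fun _ : Fin d₁ => Real.sqrt d₁) (fun _ : Fin d₂ => Real.sqrt d₂) i) * M i j)

/-- Huber loss with parameter α. -/
noncomputable def huberLoss (α x : ℝ) : ℝ := if |x| ≤ α then x ^ 2 else 2 * α * |x| - α ^ 2

/-! Because `v` is an orthonormal basis, `V_⊥V_⊥ᵀ = 1 - VVᵀ`, so `H = EV - VVᵀ(EV)`. Each entry of
the Gram matrix `VVᵀ` is at most the largest squared row norm of `V`, which is `rμ/d`, and an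
entry of `VVᵀ(EV)` is a sum of `d` such products; hence `‖H‖_max ≤ (1 + rμ)‖EV‖_max`, and
`‖EV‖_max = κ/√d`. -/

theorem Fin.sum_univ_castLE_add {M : Type*} [AddCommMonoid M] {r d : ℕ} (hrd : r ≤ d)
    (f : Fin d → M) :
    ∑ i, f i = ∑ k : Fin r, f (Fin.castLE hrd k) +
      ∑ k : Fin (d - r), f ⟨r + (k : ℕ), by have := k.isLt; omega⟩ := by
  rw [← Equiv.sum_comp (finSumFinEquiv.trans (finCongr (by omega : r + (d - r) = d))) f,
    Fintype.sum_sum_type]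
  rfl

theorem Matrix.mul_transpose_eq_castLE_add_tail {m R : Type*} [Fintype m] [CommSemiring R]
    {r d : ℕ} (hrd : r ≤ d) (U : Matrix m (Fin d) R) :
    U * Uᵀ = U.submatrix id (Fin.castLE hrd) * (U.submatrix id (Fin.castLE hrd))ᵀ +
      U.submatrix id (fun k : Fin (d - r) => ⟨r + (k : ℕ), by have := k.isLt; omega⟩) *
        (U.submatrix id (fun k : Fin (d - r) => ⟨r + (k : ℕ), by have := k.isLt; omega⟩))ᵀ := by
  ext a b
  simp only [add_apply, mul_apply, transpose_apply, submatrix_apply, id]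
  exact Fin.sum_univ_castLE_add hrd _

section MaxNorm

variable {m n p : Type*} [Fintype m] [Fintype n] [Fintype p]

theorem abs_le_matMaxNorm (M : Matrix m n ℝ) (i : m) (j : n) : |M i j| ≤ matMaxNorm M :=
  (le_ciSup (Set.finite_range fun j => |M i j|).bddAbove j).trans
    (le_ciSup (Set.finite_range fun i => ⨆ j, |M i j|).bddAbove i)

theorem matMaxNorm_nonneg (M : Matrix m n ℝ) : 0 ≤ matMaxNorm M :=
  Real.iSup_nonneg fun _ => Real.iSup_nonneg fun _ => abs_nonneg _

theorem matMaxNorm_le {M : Matrix m n ℝ} {c : ℝ} (hc : 0 ≤ c) (h : ∀ i j, |M i j| ≤ c) :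
    matMaxNorm M ≤ c :=
  Real.iSup_le (fun i => Real.iSup_le (h i) hc) hc

theorem matMaxNorm_sub_le (M N : Matrix m n ℝ) :
    matMaxNorm (M - N) ≤ matMaxNorm M + matMaxNorm N :=
  matMaxNorm_le (add_nonneg (matMaxNorm_nonneg M) (matMaxNorm_nonneg N)) fun i j =>
    (abs_sub _ _).trans (add_le_add (abs_le_matMaxNorm M i j) (abs_le_matMaxNorm N i j))

theorem matMaxNorm_mul_le (M : Matrix m n ℝ) (N : Matrix n p ℝ) :
    matMaxNorm (M * N) ≤ Fintype.card n * matMaxNorm M * matMaxNorm N := by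
  have hM := matMaxNorm_nonneg M
  have hN := matMaxNorm_nonneg N
  refine matMaxNorm_le (by positivity) fun i j => ?_
  calc |(M * N) i j| ≤ ∑ k, |M i k| * |N k j| := by
        simpa only [mul_apply, abs_mul] using Finset.abs_sum_le_sum_abs (fun k => M i k * N k j) _
    _ ≤ ∑ _k : n, matMaxNorm M * matMaxNorm N := Finset.sum_le_sum fun k _ =>
        mul_le_mul (abs_le_matMaxNorm M i k) (abs_le_matMaxNorm N k j) (abs_nonneg _) hM
    _ = _ := by rw [Finset.sum_const, Finset.card_univ, nsmul_eq_mul, mul_assoc]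

theorem sqrt_card_mul_matMaxNorm_div (M : Matrix m n ℝ) :
    √(Fintype.card m) * matMaxNorm M / √(Fintype.card m) = matMaxNorm M := by
  rcases isEmpty_or_nonempty m with hm | hm
  · simp [matMaxNorm]
  · exact mul_div_cancel_left₀ _ (by positivity)

theorem sum_sq_le_iSup_sum_sq (M : Matrix m n ℝ) (i : m) :
    ∑ j, M i j ^ 2 ≤ ⨆ i, ∑ j, M i j ^ 2 :=
  le_ciSup (Set.finite_range fun i => ∑ j, M i j ^ 2).bddAbove i

theorem matMaxNorm_mul_transpose_le (M : Matrix m n ℝ) :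
    matMaxNorm (M * Mᵀ) ≤ ⨆ i, ∑ j, M i j ^ 2 := by
  refine matMaxNorm_le (Real.iSup_nonneg fun i => Finset.sum_nonneg fun j _ => sq_nonneg _)
    fun i a => ?_
  -- termwise AM–GM: `|x y| ≤ (x² + y²) / 2`
  calc |(M * Mᵀ) i a| ≤ ∑ j, |M i j * M a j| := by
        simpa only [mul_apply, transpose_apply] using Finset.abs_sum_le_sum_abs _ _
    _ ≤ ∑ j, (M i j ^ 2 + M a j ^ 2) / 2 := Finset.sum_le_sum fun j _ => by
        rw [abs_mul, ← sq_abs (M i j), ← sq_abs (M a j)]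
        nlinarith [sq_nonneg (|M i j| - |M a j|)]
    _ = ((∑ j, M i j ^ 2) + ∑ j, M a j ^ 2) / 2 := by
        rw [← Finset.sum_div, Finset.sum_add_distrib]
    _ ≤ ⨆ i, ∑ j, M i j ^ 2 := by
        linarith [sum_sq_le_iSup_sum_sq M i, sum_sq_le_iSup_sum_sq M a]

end MaxNorm

theorem natCast_mul_matCoherence {d r : ℕ} (V : Matrix (Fin d) (Fin r) ℝ) :
    (r : ℝ) * matCoherence V = d * ⨆ i, ∑ j, V i j ^ 2 := by
  rcases Nat.eq_zero_or_pos r with rfl | hr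
  · simp
  · rw [matCoherence]
    field_simp

theorem H_max_norm_bound
    (d r : ℕ) (hrd : r ≤ d)
    (E : Matrix (Fin d) (Fin d) ℝ)
    (v : Fin d → Fin d → ℝ)
    (hon : ∀ i j, ∑ k, v i k * v j k = if i = j then (1 : ℝ) else 0)
    (V : Matrix (Fin d) (Fin r) ℝ)
    (hV : V = Matrix.of fun a k => v (Fin.castLE hrd k) a)
    (Vp : Matrix (Fin d) (Fin (d - r)) ℝ)
    (hVp : Vp = Matrix.of fun (a : Fin d) (k : Fin (d - r)) => v ⟨r + (k : ℕ), by have := k.isLt; omega⟩ a)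
    (kappa mu : ℝ)
    (hkappa : kappa = Real.sqrt d * matMaxNorm (E * V))
    (hmu : mu = matCoherence V)
    (H : Matrix (Fin d) (Fin r) ℝ) (hH : H = Vp * (Vpᵀ * E * V))
    : matMaxNorm H ≤ (1 + (r : ℝ) * mu) * kappa / Real.sqrt d := by
  have hcomplete : (of v)ᵀ * (of v)ᵀᵀ = 1 := by
    rw [transpose_transpose, mul_eq_one_comm]
    ext i j
    simpa [mul_apply, one_apply] using hon i j
  have hproj : V * Vᵀ + Vp * Vpᵀ = 1 := by
    rw [← hcomplete, mul_transpose_eq_castLE_add_tail hrd, hV, hVp]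
    rfl
  have hH' : H = E * V - V * Vᵀ * (E * V) := by
    rw [hH, ← Matrix.mul_assoc, ← Matrix.mul_assoc, Matrix.mul_assoc (Vp * Vpᵀ),
      eq_sub_of_add_eq' hproj, Matrix.sub_mul, Matrix.one_mul]
  calc matMaxNorm H
      ≤ matMaxNorm (E * V) + d * matMaxNorm (V * Vᵀ) * matMaxNorm (E * V) := by
        rw [hH']
        refine (matMaxNorm_sub_le _ _).trans (add_le_add le_rfl ?_)
        simpa using matMaxNorm_mul_le (V * Vᵀ) (E * V)
    _ ≤ matMaxNorm (E * V) + d * (⨆ i, ∑ j, V i j ^ 2) * matMaxNorm (E * V) := by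
        gcongr
        exacts [matMaxNorm_nonneg _, matMaxNorm_mul_transpose_le V]
    _ = (1 + (r : ℝ) * mu) * kappa / Real.sqrt d := by
        have hEV_div : √d * matMaxNorm (E * V) / √d = matMaxNorm (E * V) := by
          simpa using sqrt_card_mul_matMaxNorm_div (E * V)
        rw [hkappa, hmu, natCast_mul_matCoherence, mul_div_assoc, hEV_div]
        ring
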